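/- Compactness–uniqueness step: suppose (Φ⁽ⁿ⁾, Ψ⁽ⁿ⁾) are finite-energy solutions of the acoustic system with uniformly bounded energy, ‖(Φ⁽ⁿ⁾, Ψ⁽ⁿ⁾)‖_{C([0,T];M)} = 1 for a space M compactly containing the energy space on lower-order norms, and ‖δ_t⁽ⁿ⁾‖_{L²([0,T]×Γ₁)} → 0. If every weak limit (Φ̂, Ψ̂) with δ̂_t = 0 must vanish identically (by Holmgren uniqueness and the harmonic mixed boundary problem), then a contradiction arises; consequently there is C_T > 0 with LOT(Φ, Ψ) := ‖(Φ,Ψ)‖²_{C([0,T];M)} ≤ C_T ‖δ_t‖²_{L²([0,T]×Γ₁)} for all finite-energy solutions. -/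

import Mathlib

/-- Abstract compactness–uniqueness lemma behind the observability proof:
if the energy space `V` of solutions satisfies a weak observability estimate
`‖v‖² ≤ C₀(‖Bv‖² + ‖Lv‖²)` where `B` is the boundary trace `δ_t ↦ L²([0,T]×Γ₁)`
and `L` is the compact lower-order embedding into `M = C([0,T]; M)`-type norms,
and the unique-continuation property holds (`Bv = 0 ⟹ v = 0`, by Holmgren
uniqueness and the mixed harmonic boundary problem), then the lower-order terms
are controlled by the boundary term: `LOT(v) = ‖Lv‖² ≤ C_T ‖Bv‖²`. -/
theorem compactness_uniqueness
    {V M W : Type*}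
    [NormedAddCommGroup V] [InnerProductSpace ℝ V] [CompleteSpace V]
    [NormedAddCommGroup M] [NormedSpace ℝ M]
    [NormedAddCommGroup W] [NormedSpace ℝ W]
    (L : V →L[ℝ] M) (B : V →L[ℝ] W)
    -- compactness of the lower-order embedding (`H ⊂⊂ M`)
    (hLcomp : IsCompactOperator L)
    -- weak observability estimate: energy ≤ boundary term + lower-order terms
    (hweak : ∃ C₀ > (0 : ℝ), ∀ v : V, ‖v‖ ^ 2 ≤ C₀ * (‖B v‖ ^ 2 + ‖L v‖ ^ 2))
    -- unique continuation: a solution with vanishing boundary velocity vanishes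
    (huc : ∀ v : V, B v = 0 → v = 0) :
    ∃ CT > (0 : ℝ), ∀ v : V, ‖L v‖ ^ 2 ≤ CT * ‖B v‖ ^ 2 := by
  obtain ⟨C₀, hC₀, hweak⟩ := hweak
  by_contra h
  push_neg at h
  -- extract a normalized sequence with `(n+1)‖B uₙ‖² < ‖L uₙ‖²`
  have key : ∀ n : ℕ, ∃ u : V, ‖u‖ = 1 ∧ ((n : ℝ) + 1) * ‖B u‖ ^ 2 < ‖L u‖ ^ 2 := by
    intro n
    obtain ⟨v, hv⟩ := h ((n : ℝ) + 1) (by positivity)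
    have hv0 : v ≠ 0 := by
      rintro rfl
      simp at hv
    have hvn : ‖v‖ ≠ 0 := norm_ne_zero_iff.mpr hv0
    refine ⟨‖v‖⁻¹ • v, ?_, ?_⟩
    · rw [norm_smul, norm_inv, norm_norm, inv_mul_cancel₀ hvn]
    · rw [map_smul, map_smul, norm_smul, norm_smul, norm_inv, norm_norm,
        mul_pow, mul_pow]
      have hp : (0 : ℝ) < (‖v‖⁻¹) ^ 2 := by positivity
      have := mul_lt_mul_of_pos_left hv hp
      nlinarith
  choose u hu1 hu2 using key
  -- boundary terms tend to zero
  have hLn : ∀ n, ‖L (u n)‖ ≤ ‖L‖ := fun n => by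
    simpa [hu1 n] using L.le_opNorm (u n)
  have hBsq : ∀ n : ℕ, ‖B (u n)‖ ^ 2 ≤ ‖L‖ ^ 2 / ((n : ℝ) + 1) := by
    intro n
    rw [le_div_iff₀ (by positivity)]
    nlinarith [hu2 n, hLn n, norm_nonneg (L (u n)), norm_nonneg L]
  have htend : Filter.Tendsto (fun n : ℕ => ‖L‖ ^ 2 / ((n : ℝ) + 1))
      Filter.atTop (nhds 0) := by
    have h1 : Filter.Tendsto (fun n : ℕ => ((n : ℝ) + 1)) Filter.atTop Filter.atTop :=
      Filter.tendsto_atTop_add_const_right _ 1 tendsto_natCast_atTop_atTop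
    exact Filter.Tendsto.div_atTop tendsto_const_nhds h1
  have hBsq0 : Filter.Tendsto (fun n => ‖B (u n)‖ ^ 2) Filter.atTop (nhds 0) :=
    squeeze_zero (fun n => by positivity) hBsq htend
  have hB0 : Filter.Tendsto (fun n => ‖B (u n)‖) Filter.atTop (nhds 0) := by
    have := (Real.continuous_sqrt.tendsto 0).comp hBsq0
    simpa [Function.comp_def, Real.sqrt_sq (norm_nonneg _)] using this
  -- compactness: extract a subsequence with `L (u (φ n))` convergent
  have hK : IsCompact (closure <| L '' Metric.closedBall 0 2) :=
    hLcomp.isCompact_closure_image_closedBall 2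
  have hmem : ∀ n, L (u n) ∈ closure (L '' Metric.closedBall 0 2) := fun n =>
    subset_closure ⟨u n, by simp [Metric.mem_closedBall, hu1 n], rfl⟩
  obtain ⟨m, _, φ, hφ, hml⟩ := hK.tendsto_subseq hmem
  -- the subsequence is Cauchy in V by the weak observability estimate
  have hcauchy : CauchySeq (fun n => u (φ n)) := by
    rw [Metric.cauchySeq_iff]
    intro ε hε
    obtain ⟨δ, hδpos, hδ⟩ : ∃ δ > (0 : ℝ), 5 * C₀ * δ ^ 2 < ε ^ 2 := by
      refine ⟨Real.sqrt (ε ^ 2 / (6 * C₀)), Real.sqrt_pos.mpr (by positivity), ?_⟩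
      rw [Real.sq_sqrt (by positivity)]
      have hc : 5 * C₀ * (ε ^ 2 / (6 * C₀)) = 5 / 6 * ε ^ 2 := by
        field_simp
      rw [hc]; nlinarith
    have hLc : CauchySeq (fun n => L (u (φ n))) := hml.cauchySeq
    rw [Metric.cauchySeq_iff] at hLc
    obtain ⟨N₁, hN₁⟩ := hLc δ hδpos
    have hBev : ∀ᶠ n in Filter.atTop, ‖B (u n)‖ < δ := by
      filter_upwards [hB0.eventually (gt_mem_nhds hδpos)] with n hn using hn
    obtain ⟨N₂, hN₂⟩ := Filter.eventually_atTop.mp hBev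
    refine ⟨max N₁ N₂, fun i hi j hj => ?_⟩
    have hiN₁ := le_trans (le_max_left N₁ N₂) hi
    have hjN₁ := le_trans (le_max_left N₁ N₂) hj
    have hiφ : N₂ ≤ φ i := le_trans (le_trans (le_max_right N₁ N₂) hi) (hφ.le_apply)
    have hjφ : N₂ ≤ φ j := le_trans (le_trans (le_max_right N₁ N₂) hj) (hφ.le_apply)
    have hBi : ‖B (u (φ i))‖ < δ := hN₂ _ hiφ
    have hBj : ‖B (u (φ j))‖ < δ := hN₂ _ hjφ
    have hLij : ‖L (u (φ i)) - L (u (φ j))‖ < δ := by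
      have := hN₁ i hiN₁ j hjN₁
      rwa [dist_eq_norm] at this
    set d := u (φ i) - u (φ j) with hd
    have hBd : ‖B d‖ ≤ ‖B (u (φ i))‖ + ‖B (u (φ j))‖ := by
      rw [hd, map_sub]; exact norm_sub_le _ _
    have hLd : ‖L d‖ < δ := by rw [hd, map_sub]; exact hLij
    have hBd2 : ‖B d‖ ^ 2 ≤ 4 * δ ^ 2 := by
      nlinarith [norm_nonneg (B d), norm_nonneg (B (u (φ i))), norm_nonneg (B (u (φ j)))]
    have hLd2 : ‖L d‖ ^ 2 ≤ δ ^ 2 := by nlinarith [norm_nonneg (L d)]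
    have hd2 : ‖d‖ ^ 2 < ε ^ 2 := by nlinarith [hweak d]
    rw [dist_eq_norm, ← hd]
    nlinarith [norm_nonneg d]
  -- pass to the limit
  obtain ⟨v, hv⟩ := cauchySeq_tendsto_of_complete hcauchy
  have hv1 : ‖v‖ = 1 := by
    have h1 : Filter.Tendsto (fun n => ‖u (φ n)‖) Filter.atTop (nhds ‖v‖) := hv.norm
    have h2 : Filter.Tendsto (fun n => ‖u (φ n)‖) Filter.atTop (nhds 1) := by
      simp only [hu1]; exact tendsto_const_nhds
    exact tendsto_nhds_unique h1 h2
  have hBv : B v = 0 := by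
    have h1 : Filter.Tendsto (fun n => B (u (φ n))) Filter.atTop (nhds (B v)) :=
      (B.continuous.tendsto v).comp hv
    have h2 : Filter.Tendsto (fun n => B (u (φ n))) Filter.atTop (nhds 0) := by
      rw [tendsto_zero_iff_norm_tendsto_zero]
      exact hB0.comp hφ.tendsto_atTop
    exact tendsto_nhds_unique h1 h2
  have := huc v hBv
  rw [this, norm_zero] at hv1
  exact one_ne_zero hv1.symm
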